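/- arXiv:2605.01493 — 7 statements merged into one kernel-verified Lean document; each statement's English description precedes it below -/
import Mathlib

section
/- The convex hull of the graph of the monomial y = x_1 x_2 ... x_n over the box [a, b] (with 0 ≤ a_i < b_i for all i) is a polytope whose extreme points are exactly the 2^n points obtained by setting each x_i to either a_i or b_i and y to the corresponding product. -/
/-!
The function `x ↦ ∏ i, x i` is affine along every coordinate line. So if a point of its graph
has a coordinate strictly between `a i` and `b i`, it lies on the open segment joining the two
graph points above the ends of that line, and it is not extreme. Conversely, a vertex `v` is the
unique maximiser on the graph of the linear functional `q ↦ ∑ i, (v i - (a i + b i) / 2) * q i`,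
which makes it an extreme point of the convex hull.
-/

open Set Function AffineMap

lemma convex_halfSpace_lt_union_singleton {E : Type*} [AddCommGroup E] [Module ℝ E]
    (l : E →ₗ[ℝ] ℝ) (p : E) : Convex ℝ ({q | l q < l p} ∪ {p}) := by
  refine convex_iff_forall_pos.2 fun x hx y hy u v hu hv huv => ?_
  obtain rfl : v = 1 - u := by linarith
  have hcombo : l (u • x + (1 - u) • y) = u * l x + (1 - u) * l y := by simp
  rcases hx with (hx : l x < l p) | rfl <;> rcases hy with (hy : l y < l _) | rfl
  case inr.inr => exact Or.inr (Convex.combo_self huv _)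
  all_goals refine Or.inl ?_; rw [mem_ofPred_eq, hcombo]
  · linarith [mul_lt_mul_of_pos_left hx hu, mul_lt_mul_of_pos_left hy hv]
  · linarith [mul_lt_mul_of_pos_left hx hu]
  · linarith [mul_lt_mul_of_pos_left hy hv]

theorem mem_extremePoints_convexHull_of_forall_lt {E : Type*} [AddCommGroup E] [Module ℝ E]
    {S : Set E} {p : E} (l : E →ₗ[ℝ] ℝ) (hp : p ∈ S) (hlt : ∀ s ∈ S, s ≠ p → l s < l p) :
    p ∈ (convexHull ℝ S).extremePoints ℝ := by
  have hconv := convex_halfSpace_lt_union_singleton l p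
  have hhull : convexHull ℝ S ⊆ {q | l q < l p} ∪ {p} :=
    convexHull_min (fun s hs => (eq_or_ne s p).elim Or.inr fun h => Or.inl (hlt s hs h)) hconv
  refine inter_extremePoints_subset_extremePoints_of_subset hhull ⟨subset_convexHull ℝ S hp, ?_⟩
  rw [hconv.mem_extremePoints_iff_convex_sdiff, union_sdiff_right,
    sdiff_singleton_eq_self (a := p) (lt_irrefl (l p))]
  exact ⟨Or.inr rfl, convex_halfSpace_lt l.isLinear _⟩

theorem lineMap_notMem_extremePoints {E : Type*} [AddCommGroup E] [Module ℝ E] {C : Set E}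
    {x y : E} (hxy : x ≠ y) {s t u : ℝ} (hst : s < t) (htu : t < u)
    (hs : lineMap x y s ∈ C) (hu : lineMap x y u ∈ C) :
    (lineMap x y t : E) ∉ C.extremePoints ℝ := fun ht => by
  have hseg : (lineMap x y t : E) ∈ openSegment ℝ (lineMap x y s) (lineMap x y u) := by
    rw [← image_openSegment, openSegment_eq_Ioo (hst.trans htu)]
    exact mem_image_of_mem _ ⟨hst, htu⟩
  exact hst.ne (lineMap_injective ℝ hxy (ht.2 hs hu hseg))

lemma mul_sub_midpoint_le {a b x y : ℝ} (hx : x = a ∨ x = b) (hy : a ≤ y ∧ y ≤ b) :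
    y * (x - (a + b) / 2) ≤ x * (x - (a + b) / 2) := by
  rcases hx with rfl | rfl <;> nlinarith

lemma mul_sub_midpoint_lt {a b x y : ℝ} (hab : a < b) (hx : x = a ∨ x = b)
    (hy : a ≤ y ∧ y ≤ b) (hyx : y ≠ x) : y * (x - (a + b) / 2) < x * (x - (a + b) / 2) := by
  rcases hx with rfl | rfl
  · nlinarith [lt_of_le_of_ne hy.1 hyx.symm]
  · nlinarith [lt_of_le_of_ne hy.2 hyx]

section BoxGraph

variable {ι : Type*}

def boxGraph (a b : ι → ℝ) (f : (ι → ℝ) → ℝ) : Set ((ι → ℝ) × ℝ) :=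
  {p | (∀ i, a i ≤ p.1 i ∧ p.1 i ≤ b i) ∧ p.2 = f p.1}

def boxGraphVertices (a b : ι → ℝ) (f : (ι → ℝ) → ℝ) : Set ((ι → ℝ) × ℝ) :=
  {p | (∀ i, p.1 i = a i ∨ p.1 i = b i) ∧ p.2 = f p.1}

variable {a b : ι → ℝ} {f : (ι → ℝ) → ℝ} {p : (ι → ℝ) × ℝ}

theorem mem_extremePoints_convexHull_boxGraph [Fintype ι] (hab : ∀ i, a i < b i)
    (hp : p ∈ boxGraphVertices a b f) : p ∈ (convexHull ℝ (boxGraph a b f)).extremePoints ℝ := by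
  obtain ⟨hv, hpf⟩ := hp
  have hbox : ∀ i, a i ≤ p.1 i ∧ p.1 i ≤ b i := fun i => by
    rcases hv i with h | h <;> rw [h] <;> simp [(hab i).le]
  let l := (Fintype.linearCombination ℝ fun i => p.1 i - (a i + b i) / 2).comp
    (LinearMap.fst ℝ (ι → ℝ) ℝ)
  refine mem_extremePoints_convexHull_of_forall_lt l ⟨hbox, hpf⟩ fun s ⟨hs, hsf⟩ hsp => ?_
  obtain ⟨i, hi⟩ : ∃ i, s.1 i ≠ p.1 i :=
    Function.ne_iff.1 fun h => hsp (Prod.ext h (by rw [hsf, hpf, h]))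
  simp only [l, LinearMap.comp_apply, LinearMap.fst_apply, Fintype.linearCombination_apply,
    smul_eq_mul]
  exact Finset.sum_lt_sum (fun j _ => mul_sub_midpoint_le (hv j) (hs j))
    ⟨i, Finset.mem_univ i, mul_sub_midpoint_lt (hab i) (hv i) (hs i) hi⟩

theorem mem_boxGraphVertices_of_mem_extremePoints [DecidableEq ι]
    (hf : ∀ x i, ∃ c d : ℝ, ∀ t, f (update x i t) = c * t + d)
    (hp : p ∈ (convexHull ℝ (boxGraph a b f)).extremePoints ℝ) : p ∈ boxGraphVertices a b f := by
  obtain ⟨hbox, hpf⟩ := extremePoints_convexHull_subset hp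
  refine ⟨fun i => ?_, hpf⟩
  by_contra! hi
  obtain ⟨c, d, hcd⟩ := hf p.1 i
  set x₀ : (ι → ℝ) × ℝ := (update p.1 i 0, d)
  set x₁ : (ι → ℝ) × ℝ := (update p.1 i 1, c + d)
  have hline : ∀ t, lineMap x₀ x₁ t = (update p.1 i t, f (update p.1 i t)) := fun t => by
    ext j
    · rcases eq_or_ne j i with rfl | hj
      · simp [x₀, x₁, lineMap_apply_module']
      · simp [x₀, x₁, lineMap_apply_module', hj]
    · simp only [x₀, x₁, lineMap_apply_module', hcd, Prod.snd_add, Prod.snd_sub,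
        Prod.smul_snd, smul_eq_mul]
      ring
  have hmem : ∀ t ∈ Icc (a i) (b i), lineMap x₀ x₁ t ∈ convexHull ℝ (boxGraph a b f) :=
    fun t ht => hline t ▸ subset_convexHull ℝ _
      ⟨(forall_update_iff _ fun j y => a j ≤ y ∧ y ≤ b j).2 ⟨ht, fun j _ => hbox j⟩, rfl⟩
  have hne : x₀ ≠ x₁ := fun h => by simpa [x₀, x₁] using congr_fun (congr_arg Prod.fst h) i
  have hab : a i ≤ b i := (hbox i).1.trans (hbox i).2
  refine lineMap_notMem_extremePoints hne (lt_of_le_of_ne (hbox i).1 hi.1.symm)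
    (lt_of_le_of_ne (hbox i).2 hi.2) (hmem _ ⟨le_rfl, hab⟩) (hmem _ ⟨hab, le_rfl⟩) ?_
  rwa [hline, update_eq_self, ← hpf]

theorem extremePoints_convexHull_boxGraph [Fintype ι] [DecidableEq ι] (hab : ∀ i, a i < b i)
    (hf : ∀ x i, ∃ c d : ℝ, ∀ t, f (update x i t) = c * t + d) :
    (convexHull ℝ (boxGraph a b f)).extremePoints ℝ = boxGraphVertices a b f :=
  Set.ext fun _ =>
    ⟨mem_boxGraphVertices_of_mem_extremePoints hf, mem_extremePoints_convexHull_boxGraph hab⟩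

end BoxGraph

theorem extremePoints_monomial_hull_general (n : ℕ) (a b : Fin n → ℝ)
    (hab : ∀ i, a i < b i) :
    Set.extremePoints ℝ
      (convexHull ℝ {p : (Fin n → ℝ) × ℝ |
        (∀ i, a i ≤ p.1 i ∧ p.1 i ≤ b i) ∧ p.2 = ∏ i, p.1 i}) =
      {p : (Fin n → ℝ) × ℝ |
        (∀ i, p.1 i = a i ∨ p.1 i = b i) ∧ p.2 = ∏ i, p.1 i} :=
  extremePoints_convexHull_boxGraph hab fun x i =>
    ⟨∏ j ∈ Finset.univ \ {i}, x j, 0, fun t => by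
      rw [Finset.prod_update_of_mem (Finset.mem_univ i)]
      ring⟩

/-- The extreme points of the convex hull of the graph of the monomial
`y = x₁⋯xₙ` over the box `[a,b]` (with `0 ≤ aᵢ < bᵢ`) are exactly the `2ⁿ`
points obtained by setting each `xᵢ` to `aᵢ` or `bᵢ` and `y` to the product. -/
theorem extremePoints_monomial_hull (n : ℕ) (hn : 2 ≤ n) (a b : Fin n → ℝ)
    (ha : ∀ i, 0 ≤ a i) (hab : ∀ i, a i < b i) :
    Set.extremePoints ℝ
      (convexHull ℝ {p : (Fin n → ℝ) × ℝ |
        (∀ i, a i ≤ p.1 i ∧ p.1 i ≤ b i) ∧ p.2 = ∏ i, p.1 i}) =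
      {p : (Fin n → ℝ) × ℝ |
        (∀ i, p.1 i = a i ∨ p.1 i = b i) ∧ p.2 = ∏ i, p.1 i} :=
  extremePoints_monomial_hull_general n a b hab
end

section
/- If a_i = 0 for all i, the inequality -y + Σ_{i=1}^n (∏_{j≠i} b_j) x_i ≤ (n-1) ∏_{i=1}^n b_i is valid for C_n(0, b), i.e., holds for every point (x, y) with 0 ≤ x ≤ b and y = ∏ x_i. -/
/-!
Writing `Pᵢ = ∏_{j ≠ i} bⱼ`, we have `∑ᵢ Pᵢ bᵢ = n ∏ bᵢ`, so the inequality says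
`∏ bᵢ - ∏ xᵢ ≤ ∑ᵢ Pᵢ (bᵢ - xᵢ)`: lowering the coordinates from `b` to `x` decreases the monomial
by at most its linearisation at the vertex `b`. This is proved by induction on the factors, the
inductive step being `(bₐ - xₐ) (B - X) ≥ 0` for the partial products `X ≤ B`.
-/

open Finset

namespace Finset

variable {ι R : Type*} [DecidableEq ι] [CommRing R] [PartialOrder R] [IsOrderedRing R]

theorem prod_sub_prod_le_sum_sub_mul_prod_erase (s : Finset ι) {x b : ι → R}
    (hx : ∀ i ∈ s, 0 ≤ x i ∧ x i ≤ b i) :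
    ∏ i ∈ s, b i - ∏ i ∈ s, x i ≤ ∑ i ∈ s, (b i - x i) * ∏ j ∈ s.erase i, b j := by
  induction s using Finset.induction_on with
  | empty => simp
  | @insert a s ha ih =>
    have hxa := hx a (mem_insert_self a s)
    have hxs : ∀ i ∈ s, 0 ≤ x i ∧ x i ≤ b i := fun i hi => hx i (mem_insert_of_mem hi)
    have hprod_le : ∏ i ∈ s, x i ≤ ∏ i ∈ s, b i :=
      prod_le_prod (fun i hi => (hxs i hi).1) (fun i hi => (hxs i hi).2)
    have herase : ∀ i ∈ s, ∏ j ∈ (insert a s).erase i, b j = b a * ∏ j ∈ s.erase i, b j :=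
      fun i hi => by
        rw [erase_insert_of_ne (ne_of_mem_of_not_mem hi ha).symm,
          prod_insert (fun h => ha (mem_of_mem_erase h))]
    have hsum : b a * (∏ i ∈ s, b i - ∏ i ∈ s, x i) ≤
        ∑ i ∈ s, (b i - x i) * ∏ j ∈ (insert a s).erase i, b j := by
      rw [sum_congr rfl fun i hi => by rw [herase i hi, mul_left_comm], ← mul_sum]
      exact mul_le_mul_of_nonneg_left (ih hxs) (hxa.1.trans hxa.2)
    rw [prod_insert ha, prod_insert ha, sum_insert ha, erase_insert ha]
    calc b a * ∏ i ∈ s, b i - x a * ∏ i ∈ s, x i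
        = (b a - x a) * ∏ i ∈ s, b i + b a * (∏ i ∈ s, b i - ∏ i ∈ s, x i)
          - (b a - x a) * (∏ i ∈ s, b i - ∏ i ∈ s, x i) := by ring
      _ ≤ (b a - x a) * ∏ i ∈ s, b i + b a * (∏ i ∈ s, b i - ∏ i ∈ s, x i) :=
        sub_le_self _ (mul_nonneg (sub_nonneg.2 hxa.2) (sub_nonneg.2 hprod_le))
      _ ≤ _ := by gcongr

end Finset

theorem monomial_facet_valid_general (n : ℕ) (b : Fin n → ℝ)
    (x : Fin n → ℝ)
    (hx : ∀ i, 0 ≤ x i ∧ x i ≤ b i) :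
    -(∏ i, x i) + ∑ i, (∏ j ∈ Finset.univ.erase i, b j) * x i ≤
      ((n : ℝ) - 1) * ∏ i, b i := by
  have hlin := prod_sub_prod_le_sum_sub_mul_prod_erase univ (fun i _ => hx i)
  have hvertex : ∑ i, b i * ∏ j ∈ univ.erase i, b j = n * ∏ i, b i := by
    simp only [mul_prod_erase univ b (mem_univ _), sum_const, card_univ, Fintype.card_fin,
      nsmul_eq_mul]
  simp only [sub_mul, sum_sub_distrib, hvertex] at hlin
  simp only [mul_comm (∏ j ∈ univ.erase _, b j)]
  linarith

/-- If `a = 0`, the inequality `-y + Σᵢ (∏_{j≠i} bⱼ) xᵢ ≤ (n-1) ∏ᵢ bᵢ` holds for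
every point of the graph of the monomial on the box `[0,b]`. -/
theorem monomial_facet_valid (n : ℕ) (hn : 2 ≤ n) (b : Fin n → ℝ)
    (hb : ∀ i, 0 < b i) (x : Fin n → ℝ)
    (hx : ∀ i, 0 ≤ x i ∧ x i ≤ b i) :
    -(∏ i, x i) + ∑ i, (∏ j ∈ Finset.univ.erase i, b j) * x i ≤
      ((n : ℝ) - 1) * ∏ i, b i :=
  monomial_facet_valid_general n b x hx
end

section
/- The inequality y - Σ_{i=1}^{n-1} (a_n ∏_{j<n, j≠i} b_j) x_i + (n-2) a_n ∏_{j<n} b_j ≥ 0 holds at every extreme point of C_n^1, i.e., for every choice x_i ∈ {0, b_i} (i < n), x_n ∈ {a_n, b_n}, y = ∏ x_i. -/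
/-!
Every `x i` is `0` or `b i`, so the `i`-th summand is `aₙ ∏ⱼ bⱼ` or `0`, and the sum is `k aₙ ∏ⱼ bⱼ`
with `k` the number of indices where `x i = b i`. If `k` is the full count `n - 1`, the expression is
`(xₙ - aₙ) ∏ⱼ bⱼ ≥ 0`; otherwise some `x i` vanishes, the product term is `0`, and `k ≤ n - 2`.
-/

open Finset

variable {ι : Type*} [Fintype ι] [DecidableEq ι]

theorem sum_mul_prod_erase_mul_eq_card_mul_prod {b x : ι → ℝ} (hx : ∀ i, x i = 0 ∨ x i = b i)
    (c : ℝ) :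
    ∑ i, (c * ∏ j ∈ univ.erase i, b j) * x i = #{i | x i = b i} * (c * ∏ j, b j) := by
  have hterm : ∀ i, (c * ∏ j ∈ univ.erase i, b j) * x i =
      if x i = b i then c * ∏ j, b j else 0 := by
    intro i
    split_ifs with h
    · rw [h, mul_assoc, prod_erase_mul _ _ (mem_univ i)]
    · rw [(hx i).resolve_right h, mul_zero]
  rw [sum_congr rfl fun i _ => hterm i, ← sum_filter, sum_const, nsmul_eq_mul]

theorem first_inequality_nonneg {b x : ι → ℝ} (hb : ∀ i, 0 ≤ b i)
    (hx : ∀ i, x i = 0 ∨ x i = b i) {an xn : ℝ} (han : 0 ≤ an) (hxn : an ≤ xn) :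
    0 ≤ (∏ i, x i) * xn - ∑ i, (an * ∏ j ∈ univ.erase i, b j) * x i +
        ((Fintype.card ι : ℝ) - 1) * an * ∏ j, b j := by
  have hP : 0 ≤ ∏ j, b j := prod_nonneg fun i _ => hb i
  rw [sum_mul_prod_erase_mul_eq_card_mul_prod hx]
  by_cases hall : ∀ i, x i = b i
  · have hprod : ∏ i, x i = ∏ j, b j := prod_congr rfl fun i _ => hall i
    have hcard : #{i | x i = b i} = Fintype.card ι := by
      rw [filter_true_of_mem fun i _ => hall i, card_univ]
    rw [hprod, hcard]
    nlinarith [mul_nonneg hP (sub_nonneg.2 hxn)]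
  · obtain ⟨i, hi⟩ := not_forall.1 hall
    have hprod : ∏ j, x j = 0 := prod_eq_zero (mem_univ i) ((hx i).resolve_right hi)
    have hcard : #{j | x j = b j} + 1 ≤ Fintype.card ι :=
      card_lt_univ_of_notMem (x := i) (by simpa using hi)
    have hcard' : (#{j | x j = b j} : ℝ) + 1 ≤ Fintype.card ι := by exact_mod_cast hcard
    rw [hprod]
    nlinarith [mul_nonneg han hP]

/-- The inequality `y - Σ_{i<n} (aₙ ∏_{j<n, j≠i} bⱼ) xᵢ + (n-2) aₙ ∏_{j<n} bⱼ ≥ 0`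
holds at every extreme point of `C_n^1`. -/
theorem first_inequality_valid (n : ℕ) (hn : 2 ≤ n) (b : Fin (n - 1) → ℝ)
    (hb : ∀ i, 0 < b i) (an bn : ℝ) (han : 0 ≤ an) (hab : an < bn)
    (x : Fin (n - 1) → ℝ) (hx : ∀ i, x i = 0 ∨ x i = b i)
    (xn : ℝ) (hxn : xn = an ∨ xn = bn) :
    0 ≤ (∏ i, x i) * xn -
        (∑ i, (an * ∏ j ∈ Finset.univ.erase i, b j) * x i) +
        ((n : ℝ) - 2) * an * ∏ j, b j := by
  have hcard : (Fintype.card (Fin (n - 1)) : ℝ) - 1 = n - 2 := by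
    rw [Fintype.card_fin, Nat.cast_sub (by omega)]
    ring
  have hanxn : an ≤ xn := by rcases hxn with rfl | rfl <;> linarith
  simpa only [hcard] using first_inequality_nonneg (fun i => (hb i).le) hx han hanxn
end

section
/- The inequality y - Σ_{i=1}^n (∏_{j≠i} b_j) x_i + (n-1) ∏_{j=1}^n b_j ≥ 0 holds at every extreme point of C_n^1: for x with x_i ∈ {0, b_i} for i < n, x_n ∈ {a_n, b_n}, and y = ∏_{i=1}^n x_i. -/
/-!
The left-hand side is affine in `xn` and in `y = ∏ xᵢ`, and splits as
`(∏ b - y) (bn - xn) + bn (y + (m - 1) ∏ b - Σᵢ (∏_{j≠i} bⱼ) xᵢ)` with `m = n - 1`.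
The first summand is nonnegative because `y ≤ ∏ b` and `xn ≤ bn`. The second is the same
inequality for the box `∏ [0, bᵢ]` alone: at a vertex either `x = b` and it is an equality,
or some `xₖ = 0`, so `y = 0` and each of the remaining `m - 1` terms of the sum is at most `∏ b`.
-/

open Finset

section BoxVertex

variable {ι R : Type*} [Fintype ι] [DecidableEq ι] [CommRing R] [LinearOrder R]
  [IsStrictOrderedRing R] {b x : ι → R}

lemma prod_erase_mul_le_prod (hb : ∀ i, 0 ≤ b i) (hx : ∀ i, x i = 0 ∨ x i = b i) (i : ι) :
    (∏ j ∈ univ.erase i, b j) * x i ≤ ∏ j, b j := by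
  rcases hx i with h | h
  · rw [h, mul_zero]
    exact prod_nonneg fun j _ => hb j
  · rw [h, prod_erase_mul _ _ (mem_univ i)]

lemma sum_prod_erase_mul_le_prod_add (hb : ∀ i, 0 ≤ b i) (hx : ∀ i, x i = 0 ∨ x i = b i) :
    ∑ i, (∏ j ∈ univ.erase i, b j) * x i ≤
      ∏ i, x i + ((Fintype.card ι : R) - 1) * ∏ i, b i := by
  by_cases hall : ∀ i, x i = b i
  · obtain rfl : x = b := funext hall
    simp only [prod_erase_mul _ _ (mem_univ _), sum_const, card_univ, nsmul_eq_mul]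
    linarith
  · obtain ⟨k, hk⟩ := not_forall.1 hall
    have hxk : x k = 0 := (hx k).resolve_right hk
    rw [prod_eq_zero (mem_univ k) hxk, zero_add, ← sum_erase_add _ _ (mem_univ k), hxk,
      mul_zero, add_zero]
    calc ∑ i ∈ univ.erase k, (∏ j ∈ univ.erase i, b j) * x i
        ≤ ∑ _i ∈ univ.erase k, ∏ j, b j := sum_le_sum fun i _ => prod_erase_mul_le_prod hb hx i
      _ = ((Fintype.card ι : R) - 1) * ∏ i, b i := by
        rw [sum_const, card_erase_of_mem (mem_univ k), card_univ, nsmul_eq_mul,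
          Nat.cast_pred (Fintype.card_pos_iff.2 ⟨k⟩)]

end BoxVertex

theorem second_inequality_valid_general (n : ℕ) (hn : 2 ≤ n) (b : Fin (n - 1) → ℝ)
    (hb : ∀ i, 0 < b i) (an bn : ℝ) (hbn : 0 < bn)
    (hab : an < bn)
    (x : Fin (n - 1) → ℝ) (hx : ∀ i, x i = 0 ∨ x i = b i)
    (xn : ℝ) (hxn : xn = an ∨ xn = bn) :
    0 ≤ (∏ i, x i) * xn -
        (∑ i, (bn * ∏ j ∈ Finset.univ.erase i, b j) * x i) -
        (∏ j, b j) * xn +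
        ((n : ℝ) - 1) * bn * ∏ j, b j := by
  have hx_mem : ∀ i, 0 ≤ x i ∧ x i ≤ b i := fun i => by
    rcases hx i with h | h <;> rw [h] <;> simp [(hb i).le]
  have hprod : ∏ i, x i ≤ ∏ i, b i :=
    prod_le_prod (fun i _ => (hx_mem i).1) fun i _ => (hx_mem i).2
  have hxn_le : xn ≤ bn := by
    rcases hxn with rfl | rfl
    exacts [hab.le, le_rfl]
  have hbox := sum_prod_erase_mul_le_prod_add (fun i => (hb i).le) hx
  rw [Fintype.card_fin, Nat.cast_sub (by omega), Nat.cast_one] at hbox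
  simp_rw [mul_assoc bn, ← mul_sum]
  nlinarith [mul_nonneg (sub_nonneg.2 hprod) (sub_nonneg.2 hxn_le),
    mul_le_mul_of_nonneg_left hbox hbn.le]

/-- The inequality `y - Σᵢ (∏_{j≠i} bⱼ) xᵢ + (n-1) ∏ⱼ bⱼ ≥ 0` holds at every
extreme point of `C_n^1`. -/
theorem second_inequality_valid (n : ℕ) (hn : 2 ≤ n) (b : Fin (n - 1) → ℝ)
    (hb : ∀ i, 0 < b i) (an bn : ℝ) (hbn : 0 < bn) (han : 0 ≤ an)
    (hab : an < bn)
    (x : Fin (n - 1) → ℝ) (hx : ∀ i, x i = 0 ∨ x i = b i)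
    (xn : ℝ) (hxn : xn = an ∨ xn = bn) :
    0 ≤ (∏ i, x i) * xn -
        (∑ i, (bn * ∏ j ∈ Finset.univ.erase i, b j) * x i) -
        (∏ j, b j) * xn +
        ((n : ℝ) - 1) * bn * ∏ j, b j :=
  second_inequality_valid_general n hn b hb an bn hbn hab x hx xn hxn
end

section
/- For each i < n, the inequality -y + (a_n ∏_{j<n, j≠i} b_j) x_i + (∏_{j<n} b_j) x_n - a_n ∏_{j<n} b_j ≥ 0 holds at every extreme point of C_n^1. -/
/-!
At a vertex either `xᵢ = 0`, so `y = 0` and the left side is `(∏ bⱼ)(xₙ - aₙ) ≥ 0`, or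
`xᵢ = bᵢ`, so the `aₙ`-terms cancel and the left side is `xₙ (∏ bⱼ - ∏ xⱼ) ≥ 0`.
-/

theorem Finset.prod_le_prod_of_forall_eq_zero_or_eq {ι R : Type*} [CommSemiring R] [PartialOrder R]
    [IsOrderedRing R] (s : Finset ι) {x b : ι → R} (hb : ∀ j ∈ s, 0 ≤ b j)
    (hx : ∀ j ∈ s, x j = 0 ∨ x j = b j) : ∏ j ∈ s, x j ≤ ∏ j ∈ s, b j := by
  have hx_nonneg (j) (hj : j ∈ s) : 0 ≤ x j := (hx j hj).elim (·.ge) (· ▸ hb j hj)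
  refine Finset.prod_le_prod hx_nonneg fun j hj => ?_
  rcases hx j hj with h | h
  · exact h ▸ hb j hj
  · exact h.le

theorem third_inequality_valid_general (n : ℕ) (b : Fin (n - 1) → ℝ)
    (hb : ∀ j, 0 < b j) (an bn : ℝ) (han : 0 ≤ an) (hab : an < bn)
    (i : Fin (n - 1))
    (x : Fin (n - 1) → ℝ) (hx : ∀ j, x j = 0 ∨ x j = b j)
    (xn : ℝ) (hxn : xn = an ∨ xn = bn) :
    0 ≤ -((∏ j, x j) * xn) +
        (an * ∏ j ∈ Finset.univ.erase i, b j) * x i +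
        (∏ j, b j) * xn - an * ∏ j, b j := by
  have han_le : an ≤ xn := hxn.elim (·.ge) (· ▸ hab.le)
  have hB : 0 ≤ ∏ j, b j := Finset.prod_nonneg fun j _ => (hb j).le
  rcases hx i with hxi | hxi
  · have hy : ∏ j, x j = 0 := Finset.prod_eq_zero (Finset.mem_univ i) hxi
    have := mul_le_mul_of_nonneg_left han_le hB
    rw [hy, hxi]
    linarith
  · have hyB : ∏ j, x j ≤ ∏ j, b j :=
      Finset.univ.prod_le_prod_of_forall_eq_zero_or_eq (fun j _ => (hb j).le) fun j _ => hx j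
    have := mul_le_mul_of_nonneg_right hyB (han.trans han_le)
    rw [hxi, mul_assoc, Finset.prod_erase_mul _ _ (Finset.mem_univ i)]
    linarith

/-- For each `i < n`, the inequality
`-y + (aₙ ∏_{j<n, j≠i} bⱼ) xᵢ + (∏_{j<n} bⱼ) xₙ - aₙ ∏_{j<n} bⱼ ≥ 0` holds at
every extreme point of `C_n^1`. -/
theorem third_inequality_valid (n : ℕ) (hn : 2 ≤ n) (b : Fin (n - 1) → ℝ)
    (hb : ∀ j, 0 < b j) (an bn : ℝ) (han : 0 ≤ an) (hab : an < bn)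
    (i : Fin (n - 1))
    (x : Fin (n - 1) → ℝ) (hx : ∀ j, x j = 0 ∨ x j = b j)
    (xn : ℝ) (hxn : xn = an ∨ xn = bn) :
    0 ≤ -((∏ j, x j) * xn) +
        (an * ∏ j ∈ Finset.univ.erase i, b j) * x i +
        (∏ j, b j) * xn - an * ∏ j, b j :=
  third_inequality_valid_general n b hb an bn han hab i x hx xn hxn
end

section
/- For each i < n, the inequality y ≤ (b_n ∏_{j<n, j≠i} b_j) x_i holds for every point in the box [0,b_1]×⋯×[0,b_{n-1}]×[a_n,b_n] with y = ∏_{j=1}^n x_j, and hence (by linearity) on C_n^1. -/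
namespace Finset

variable {ι R : Type*} [CommMonoidWithZero R] [Preorder R] [ZeroLEOneClass R] [PosMulMono R]
  [DecidableEq ι]

theorem prod_le_mul_prod_erase_of_le {s : Finset ι} {i : ι} (hi : i ∈ s) {x b : ι → R}
    (h0 : ∀ j ∈ s, 0 ≤ x j) (hxb : ∀ j ∈ s, x j ≤ b j) :
    ∏ j ∈ s, x j ≤ x i * ∏ j ∈ s.erase i, b j := by
  rw [← mul_prod_erase s x hi]
  exact mul_le_mul_of_nonneg_left
    (prod_le_prod (fun j hj => h0 j (mem_of_mem_erase hj)) fun j hj => hxb j (mem_of_mem_erase hj))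
    (h0 i hi)

end Finset

theorem fourth_inequality_valid_general (n : ℕ) (b : Fin (n - 1) → ℝ)
    (an bn : ℝ) (han : 0 ≤ an) (i : Fin (n - 1))
    (x : Fin (n - 1) → ℝ) (hx : ∀ j, 0 ≤ x j ∧ x j ≤ b j)
    (xn : ℝ) (hxn : an ≤ xn ∧ xn ≤ bn) :
    (∏ j, x j) * xn ≤ (bn * ∏ j ∈ Finset.univ.erase i, b j) * x i := by
  have hb : ∀ j, 0 ≤ b j := fun j => (hx j).1.trans (hx j).2
  calc (∏ j, x j) * xn ≤ (x i * ∏ j ∈ Finset.univ.erase i, b j) * bn :=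
        mul_le_mul
          (Finset.prod_le_mul_prod_erase_of_le (Finset.mem_univ i) (fun j _ => (hx j).1)
            fun j _ => (hx j).2)
          hxn.2 (han.trans hxn.1) (mul_nonneg (hx i).1 (Finset.prod_nonneg fun j _ => hb j))
    _ = (bn * ∏ j ∈ Finset.univ.erase i, b j) * x i := by ring

/-- For each `i < n`, the inequality `y ≤ (bₙ ∏_{j<n, j≠i} bⱼ) xᵢ` holds for
every point of the box `[0,b₁]×⋯×[0,b_{n-1}]×[aₙ,bₙ]` with `y = ∏ⱼ xⱼ`. -/
theorem fourth_inequality_valid (n : ℕ) (hn : 2 ≤ n) (b : Fin (n - 1) → ℝ)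
    (hb : ∀ j, 0 < b j) (an bn : ℝ) (hbn : 0 < bn) (han : 0 ≤ an)
    (hab : an < bn) (i : Fin (n - 1))
    (x : Fin (n - 1) → ℝ) (hx : ∀ j, 0 ≤ x j ∧ x j ≤ b j)
    (xn : ℝ) (hxn : an ≤ xn ∧ xn ≤ bn) :
    (∏ j, x j) * xn ≤ (bn * ∏ j ∈ Finset.univ.erase i, b j) * x i :=
  fourth_inequality_valid_general n b an bn han i x hx xn hxn
end

section
/- The maximum of c_0 y + Σ_i c_i x_i over the extreme points of C_n^1 equals the maximum of the four values: (i) c_0 b_n Π + c_n b_n + S, (ii) c_0 a_n Π + c_n a_n + S, (iii) c_n b_n + Σ_{i∈N_n^+} c_i b_i − δ, (iv) c_n a_n + Σ_{i∈N_n^+} c_i b_i − δ, where S = Σ_{i<n} c_i b_i, N_n^+ = {i < n : c_i ≥ 0}, and δ = min_{j<n} c_j b_j if all c_i ≥ 0 (i < n) and δ = 0 otherwise. -/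
/-!
At the vertex with `xᵢ = bᵢ` for all `i < n` the objective takes one of the values (i), (ii).
Every other vertex has a coordinate `xⱼ = 0`, so `y = 0` there and the objective reduces
to `cₙ xₙ + Σ cᵢ xᵢ`. Over `0/b`-vectors with a zero coordinate, `Σ cᵢ xᵢ` is maximised by
taking `xᵢ = bᵢ` exactly when `cᵢ ≥ 0`; if all `cᵢ ≥ 0` this vector has no zero coordinate,
and the cheapest coordinate to zero out is one minimising `cⱼ bⱼ`. Either way the maximum
is `Σ_{N⁺} cᵢ bᵢ - δ`, which gives (iii) and (iv).
-/

open Finset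

section ZeroFace

variable {ι : Type*} [Fintype ι] {b c x : ι → ℝ}

def zeroFaceValues (b c : ι → ℝ) : Set ℝ :=
  {s | ∃ x : ι → ℝ, (∀ i, x i = 0 ∨ x i = b i) ∧ (∃ j, x j = 0) ∧
    s = ∑ i, c i * x i}

lemma sum_mul_le_sum_filter_nonneg (hx : ∀ i, 0 ≤ x i ∧ x i ≤ b i) :
    ∑ i, c i * x i ≤ ∑ i ∈ univ.filter (fun i => 0 ≤ c i), c i * b i := by
  rw [sum_filter]
  refine sum_le_sum fun i _ => ?_
  split_ifs with hc
  · exact mul_le_mul_of_nonneg_left (hx i).2 hc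
  · exact mul_nonpos_of_nonpos_of_nonneg (le_of_not_ge hc) (hx i).1

lemma sum_mul_le_sum_sub_of_eq_zero (hc : ∀ i, 0 ≤ c i) (hx : ∀ i, x i ≤ b i) {j : ι}
    (hj : x j = 0) : ∑ i, c i * x i ≤ ∑ i, c i * b i - c j * b j := by
  classical
  rw [← add_sum_erase _ _ (mem_univ j), ← add_sum_erase _ (fun i => c i * b i) (mem_univ j),
    hj, mul_zero, zero_add, add_sub_cancel_left]
  exact sum_le_sum fun i _ => mul_le_mul_of_nonneg_left (hx i) (hc i)

lemma isGreatest_zeroFaceValues_of_nonneg [Nonempty ι] (hb : ∀ i, 0 ≤ b i)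
    (hc : ∀ i, 0 ≤ c i) :
    IsGreatest (zeroFaceValues b c)
      (∑ i, c i * b i - univ.inf' univ_nonempty (fun j => c j * b j)) := by
  classical
  obtain ⟨j, -, hj⟩ := exists_mem_eq_inf' univ_nonempty (fun j => c j * b j)
  refine ⟨⟨Function.update b j 0, fun i => ?_, ⟨j, by simp⟩, ?_⟩, ?_⟩
  · by_cases hij : i = j <;> simp [hij]
  · rw [hj, ← sum_erase_eq_sub (mem_univ j),
      ← sum_erase (a := j) (f := fun i => c i * Function.update b j 0 i) _ (by simp)]
    exact sum_congr rfl fun i hi => by rw [Function.update_of_ne (ne_of_mem_erase hi)]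
  · rintro s ⟨x, hx, ⟨k, hk⟩, rfl⟩
    have hxb (i : ι) : x i ≤ b i := by rcases hx i with h | h <;> simp [h, hb i]
    calc ∑ i, c i * x i ≤ ∑ i, c i * b i - c k * b k := sum_mul_le_sum_sub_of_eq_zero hc hxb hk
      _ ≤ _ := sub_le_sub_left (inf'_le (fun j => c j * b j) (mem_univ k)) _

lemma isGreatest_zeroFaceValues_of_exists_neg (hb : ∀ i, 0 ≤ b i) (hc : ∃ i, c i < 0) :
    IsGreatest (zeroFaceValues b c) (∑ i ∈ univ.filter (fun i => 0 ≤ c i), c i * b i) := by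
  obtain ⟨k, hk⟩ := hc
  refine ⟨⟨fun i => if 0 ≤ c i then b i else 0, fun i => ?_, ⟨k, by simp [hk]⟩, ?_⟩, ?_⟩
  · by_cases hi : 0 ≤ c i <;> simp [hi]
  · simp [sum_filter, mul_ite]
  · rintro s ⟨x, hx, -, rfl⟩
    exact sum_mul_le_sum_filter_nonneg fun i => by rcases hx i with h | h <;> simp [h, hb i]

end ZeroFace

lemma isGreatest_vertexValues {ι : Type*} [Fintype ι] {b c : ι → ℝ} {m : ℝ}
    (hm : IsGreatest (zeroFaceValues b c) m) (an bn c0 cn : ℝ) :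
    IsGreatest
      {z : ℝ | ∃ (x : ι → ℝ) (xn : ℝ),
        (∀ i, x i = 0 ∨ x i = b i) ∧ (xn = an ∨ xn = bn) ∧
        z = c0 * ((∏ i, x i) * xn) + (∑ i, c i * x i) + cn * xn}
      (max
        (max (c0 * bn * (∏ i, b i) + cn * bn + ∑ i, c i * b i)
             (c0 * an * (∏ i, b i) + cn * an + ∑ i, c i * b i))
        (max (cn * bn + m) (cn * an + m))) := by
  have shift (t : ℝ) : IsGreatest ((t + ·) '' zeroFaceValues b c) (t + m) :=
    Monotone.map_isGreatest (fun _ _ h => add_le_add_right h t) hm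
  convert ((isGreatest_singleton (a := c0 * bn * (∏ i, b i) + cn * bn + ∑ i, c i * b i)).union
    (isGreatest_singleton (a := c0 * an * (∏ i, b i) + cn * an + ∑ i, c i * b i))).union
    ((shift (cn * bn)).union (shift (cn * an))) using 1
  · rfl
  ext z
  constructor
  · rintro ⟨x, xn, hx, hxn, rfl⟩
    by_cases hzero : ∃ j, x j = 0
    · have hprod : ∏ i, x i = 0 := by
        obtain ⟨j, hj⟩ := hzero
        exact prod_eq_zero (mem_univ j) hj
      right
      rcases hxn with rfl | rfl
      · exact Or.inr ⟨_, ⟨x, hx, hzero, rfl⟩, by simp only [hprod]; ring⟩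
      · exact Or.inl ⟨_, ⟨x, hx, hzero, rfl⟩, by simp only [hprod]; ring⟩
    · obtain rfl : x = b := funext fun i => (hx i).resolve_left fun h => hzero ⟨i, h⟩
      left
      rcases hxn with rfl | rfl
      · exact Or.inr (by simp only [Set.mem_singleton_iff]; ring)
      · exact Or.inl (by simp only [Set.mem_singleton_iff]; ring)
  · rintro ((rfl | rfl) |
      ⟨_, ⟨x, hx, ⟨j, hj⟩, rfl⟩, rfl⟩ | ⟨_, ⟨x, hx, ⟨j, hj⟩, rfl⟩, rfl⟩)
    · exact ⟨b, bn, fun _ => Or.inr rfl, Or.inr rfl, by ring⟩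
    · exact ⟨b, an, fun _ => Or.inr rfl, Or.inl rfl, by ring⟩
    · exact ⟨x, bn, hx, Or.inr rfl, by simp only [prod_eq_zero (mem_univ j) hj]; ring⟩
    · exact ⟨x, an, hx, Or.inl rfl, by simp only [prod_eq_zero (mem_univ j) hj]; ring⟩

/-- The maximum of `c₀ y + Σᵢ cᵢ xᵢ` over the extreme points of `C_n^1` equals
the maximum of the four candidate values from the primal algorithm. -/
theorem primal_algorithm_max (n : ℕ) (hn : 2 ≤ n) (b : Fin (n - 1) → ℝ)
    (hb : ∀ i, 0 < b i) (an bn : ℝ)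
    (c0 cn : ℝ) (c : Fin (n - 1) → ℝ) (δ : ℝ)
    (hδpos : (∀ i, 0 ≤ c i) →
      δ = Finset.univ.inf' ⟨⟨0, by omega⟩, Finset.mem_univ _⟩
            (fun j => c j * b j))
    (hδneg : ¬ (∀ i, 0 ≤ c i) → δ = 0) :
    IsGreatest
      {z : ℝ | ∃ (x : Fin (n - 1) → ℝ) (xn : ℝ),
        (∀ i, x i = 0 ∨ x i = b i) ∧ (xn = an ∨ xn = bn) ∧
        z = c0 * ((∏ i, x i) * xn) + (∑ i, c i * x i) + cn * xn}
      (max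
        (max (c0 * bn * (∏ i, b i) + cn * bn + ∑ i, c i * b i)
             (c0 * an * (∏ i, b i) + cn * an + ∑ i, c i * b i))
        (max (cn * bn + (∑ i ∈ Finset.univ.filter (fun i => 0 ≤ c i), c i * b i) - δ)
             (cn * an + (∑ i ∈ Finset.univ.filter (fun i => 0 ≤ c i), c i * b i) - δ))) := by
  have : Nonempty (Fin (n - 1)) := ⟨⟨0, by omega⟩⟩
  have hb' : ∀ i, 0 ≤ b i := fun i => (hb i).le
  simp only [add_sub_assoc]
  refine isGreatest_vertexValues ?_ an bn c0 cn
  by_cases hc : ∀ i, 0 ≤ c i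
  · rw [hδpos hc, filter_true_of_mem fun i _ => hc i]
    exact isGreatest_zeroFaceValues_of_nonneg hb' hc
  · rw [hδneg hc, sub_zero]
    exact isGreatest_zeroFaceValues_of_exists_neg hb' (by simpa using hc)
end
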